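/- arXiv:2203.13065 — 7 statements merged into one kernel-verified Lean document; each statement's English description precedes it below -/
import Mathlib

section
/- Let A be a 2×2 real matrix with complex eigenvalues α ± iβ where α ≠ 0 and β ≠ 0, let ε > 0, let e be a unit vector in ℝ², and let φ(t) = ε(e^{tA} − I)A⁻¹e. If x(t) = e^{tA}x₀ is any solution of x' = Ax such that sup_{t∈ℝ} ‖φ(t) − x(t)‖_∞ < ∞, then x₀ = εA⁻¹e, and consequently ‖φ(t) − x(t)‖_∞ = ε‖A⁻¹e‖_∞ for all t ∈ ℝ. -/
/-!
Since `A` has trace `2α` and determinant `α² + β²`, Cayley–Hamilton gives `(A - α)² = -β²`, so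
`J = β⁻¹ (A - α)` is a complex structure and `e^{tA} = e^{αt} e^{tβJ}`. At the times
`t = 2πn/β` the rotation part `e^{2πnJ}` is the identity, so `e^{tA} = e^{αt}`.
With `w = εA⁻¹e` we have `φ(t) - x(t) = e^{tA}(w - x₀) - w`; along these times this is
`e^{αt}(w - x₀) - w`, and as `αt` takes arbitrarily large values, boundedness forces `x₀ = w`.
-/

open Real NormedSpace

section NormedAlgebra

variable {R : Type*} [NormedRing R] [NormedAlgebra ℝ R]

theorem exp_smul_one (c : ℝ) : exp (c • (1 : R)) = Real.exp c • 1 := by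
  rw [← Algebra.algebraMap_eq_smul_one, ← Algebra.algebraMap_eq_smul_one, Real.exp_eq_exp_ℝ,
    algebraMap_exp_comm]

theorem exp_two_pi_int_smul_of_mul_self_eq_neg_one {J : R} (hJ : J * J = -1) (n : ℤ) :
    exp ((2 * π * n) • J) = 1 := by
  -- `exp` does not depend on a choice of `ℚ`-algebra structure; the library lemmas need one.
  let _ : NormedAlgebra ℚ R := NormedAlgebra.restrictScalars ℚ ℝ R
  let f : ℂ →ₐ[ℝ] R := Complex.lift ⟨J, hJ⟩
  have hf : Continuous f := f.toLinearMap.continuous_of_finiteDimensional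
  have hfI : f Complex.I = J := Complex.liftAux_apply_I J hJ
  have h2pi : (2 * π * n : ℝ) • Complex.I = n * (2 * π * Complex.I) := by
    rw [Complex.real_smul]
    push_cast
    ring
  rw [← hfI, ← map_smul, h2pi, ← map_exp f hf, ← Complex.exp_eq_exp_ℂ,
    Complex.exp_int_mul_two_pi_mul_I, map_one]

variable [CompleteSpace R]

theorem exp_two_pi_int_div_smul_of_sub_smul_one_mul_self {a : R} {α β : ℝ} (hβ : β ≠ 0)
    (ha : (a - α • 1) * (a - α • 1) = -(β ^ 2) • 1) (n : ℤ) :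
    exp ((2 * π * n / β) • a) = Real.exp (α * (2 * π * n / β)) • 1 := by
  let _ : NormedAlgebra ℚ R := NormedAlgebra.restrictScalars ℚ ℝ R
  set J := β⁻¹ • (a - α • 1)
  have hJ : J * J = -1 := by
    rw [smul_mul_smul, ha, smul_smul, show β⁻¹ * β⁻¹ * -β ^ 2 = -1 by field_simp, neg_one_smul]
  have hsplit : (2 * π * n / β) • a = (α * (2 * π * n / β)) • (1 : R) + (2 * π * n) • J := by
    simp only [J, smul_smul, smul_sub]
    field_simp
    module
  have hcomm : Commute ((α * (2 * π * n / β)) • (1 : R)) ((2 * π * n) • J) :=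
    ((Commute.one_left J).smul_left _).smul_right _
  rw [hsplit, exp_add_of_commute hcomm, exp_smul_one,
    exp_two_pi_int_smul_of_mul_self_eq_neg_one hJ, mul_one]

end NormedAlgebra

theorem Matrix.sub_smul_one_mul_self_fin_two {K : Type*} [CommRing K]
    {A : Matrix (Fin 2) (Fin 2) K} {α β : K} (htr : A.trace = 2 * α)
    (hdet : A.det = α ^ 2 + β ^ 2) :
    (A - α • 1) * (A - α • 1) = -(β ^ 2) • 1 := by
  rw [Matrix.trace_fin_two] at htr
  rw [Matrix.det_fin_two] at hdet
  ext i j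
  fin_cases i <;> fin_cases j <;>
    simp only [Fin.zero_eta, Fin.mk_one, Fin.isValue, Matrix.mul_apply, Matrix.sub_apply,
      Matrix.smul_apply, smul_eq_mul, Fin.sum_univ_two, Matrix.one_apply_eq, ne_eq, zero_ne_one,
      one_ne_zero, not_false_eq_true, Matrix.one_apply_ne, mul_one, mul_zero, sub_zero]
  · linear_combination A 0 0 * htr - hdet
  · linear_combination A 0 1 * htr
  · linear_combination A 1 0 * htr
  · linear_combination A 1 1 * htr - hdet

theorem Matrix.exp_two_pi_int_div_smul_fin_two {A : Matrix (Fin 2) (Fin 2) ℝ} {α β : ℝ}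
    (hβ : β ≠ 0) (htr : A.trace = 2 * α) (hdet : A.det = α ^ 2 + β ^ 2) (n : ℤ) :
    exp ((2 * π * n / β) • A) = Real.exp (α * (2 * π * n / β)) • 1 :=
  open scoped Matrix.Norms.Operator in
  exp_two_pi_int_div_smul_of_sub_smul_one_mul_self hβ
    (Matrix.sub_smul_one_mul_self_fin_two htr hdet) n

theorem exists_int_lt_mul {c : ℝ} (hc : c ≠ 0) (K : ℝ) : ∃ n : ℤ, K < c * n := by
  rcases hc.lt_or_gt with hc | hc
  · obtain ⟨n, hn⟩ := exists_int_lt (K / c)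
    exact ⟨n, by rw [mul_comm]; exact (lt_div_iff_of_neg hc).mp hn⟩
  · obtain ⟨n, hn⟩ := exists_int_gt (K / c)
    exact ⟨n, by rw [mul_comm]; exact (div_lt_iff₀ hc).mp hn⟩

theorem eq_zero_of_forall_norm_exp_mul_int_smul_sub_le {E : Type*} [NormedAddCommGroup E]
    [NormedSpace ℝ E] {c C : ℝ} (hc : c ≠ 0) {v w : E}
    (h : ∀ n : ℤ, ‖Real.exp (c * n) • v - w‖ ≤ C) : v = 0 := by
  by_contra hv
  have hv : 0 < ‖v‖ := norm_pos_iff.mpr hv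
  obtain ⟨n, hn⟩ := exists_int_lt_mul hc ((C + ‖w‖) / ‖v‖)
  have hgrowth : C + ‖w‖ < Real.exp (c * n) * ‖v‖ := by
    rw [div_lt_iff₀ hv] at hn
    nlinarith [Real.add_one_le_exp (c * n)]
  have hbound : Real.exp (c * n) * ‖v‖ ≤ C + ‖w‖ := by
    have := norm_sub_norm_le (Real.exp (c * n) • v) w
    rw [norm_smul, Real.norm_of_nonneg (Real.exp_pos _).le] at this
    linarith [h n]
  linarith

open Matrix

theorem stmt_4_general (A : Matrix (Fin 2) (Fin 2) ℝ) (alpha beta : ℝ)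
    (halpha : alpha ≠ 0) (hbeta : beta ≠ 0)
    (htr : A.trace = 2 * alpha) (hdet : A.det = alpha ^ 2 + beta ^ 2)
    (ε : ℝ) (hε : 0 < ε) (e : Fin 2 → ℝ)
    (φ : ℝ → (Fin 2 → ℝ))
    (hφ : ∀ t : ℝ, φ t = ε • ((NormedSpace.exp (t • A) - 1).mulVec (A⁻¹.mulVec e)))
    (x₀ : Fin 2 → ℝ) (x : ℝ → (Fin 2 → ℝ))
    (hx : ∀ t : ℝ, x t = (NormedSpace.exp (t • A)).mulVec x₀)
    (hbdd : ∃ C : ℝ, ∀ t : ℝ, ‖φ t - x t‖ ≤ C) :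
    x₀ = ε • A⁻¹.mulVec e ∧ ∀ t : ℝ, ‖φ t - x t‖ = ε * ‖A⁻¹.mulVec e‖ := by
  set w := ε • A⁻¹.mulVec e
  have hdiff (t : ℝ) : φ t - x t = (exp (t • A)).mulVec (w - x₀) - w := by
    rw [hφ, hx, sub_mulVec, one_mulVec, mulVec_sub, mulVec_smul, smul_sub]
    abel
  obtain ⟨C, hC⟩ := hbdd
  have hc : 2 * π * alpha / beta ≠ 0 := by positivity
  have hx₀ : w - x₀ = 0 := by
    refine eq_zero_of_forall_norm_exp_mul_int_smul_sub_le (C := C) (w := w) hc fun n => ?_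
    have := hC (2 * π * n / beta)
    rwa [hdiff, exp_two_pi_int_div_smul_fin_two hbeta htr hdet, smul_mulVec, one_mulVec,
      show alpha * (2 * π * n / beta) = 2 * π * alpha / beta * n by ring] at this
  refine ⟨(sub_eq_zero.mp hx₀).symm, fun t => ?_⟩
  rw [hdiff, hx₀, mulVec_zero, zero_sub, norm_neg, norm_smul, Real.norm_of_nonneg hε.le]

theorem stmt_4 (A : Matrix (Fin 2) (Fin 2) ℝ) (alpha beta : ℝ)
    (halpha : alpha ≠ 0) (hbeta : beta ≠ 0)
    (htr : A.trace = 2 * alpha) (hdet : A.det = alpha ^ 2 + beta ^ 2)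
    (ε : ℝ) (hε : 0 < ε) (e : Fin 2 → ℝ) (he : ‖e‖ = 1)
    (φ : ℝ → (Fin 2 → ℝ))
    (hφ : ∀ t : ℝ, φ t = ε • ((NormedSpace.exp (t • A) - 1).mulVec (A⁻¹.mulVec e)))
    (x₀ : Fin 2 → ℝ) (x : ℝ → (Fin 2 → ℝ))
    (hx : ∀ t : ℝ, x t = (NormedSpace.exp (t • A)).mulVec x₀)
    (hbdd : ∃ C : ℝ, ∀ t : ℝ, ‖φ t - x t‖ ≤ C) :
    x₀ = ε • A⁻¹.mulVec e ∧ ∀ t : ℝ, ‖φ t - x t‖ = ε * ‖A⁻¹.mulVec e‖ :=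
  stmt_4_general A alpha beta halpha hbeta htr hdet ε hε e φ hφ x₀ x hx hbdd
end

section
/- Let A be a 2×2 real matrix whose two eigenvalues both have nonzero real part, and suppose the system x' = Ax is Hyers-Ulam stable on ℝ with constant K, i.e., for every ε > 0 and every differentiable φ: ℝ → ℝ² with ‖φ'(t) − Aφ(t)‖_∞ ≤ ε for all t, there exists a solution x of x' = Ax with ‖φ(t) − x(t)‖_∞ ≤ Kε for all t. Then for every unit vector e in ℝ², K ≥ ‖A⁻¹e‖_∞, and in particular K ≥ ‖A⁻¹‖_∞ (the induced max-norm). -/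
/-! Test the stability hypothesis on the constant function `φ ≡ A⁻¹ e`: its defect `φ' - A φ = -e`
has norm `‖e‖`, so some solution `x` of `x' = A x` stays within `K ‖e‖` of `A⁻¹ e`. But
`x = (A⁻¹ x)'` has a bounded primitive, so its means over `[0, T]` tend to `0`, while the means
of `A⁻¹ e - x` stay within `K ‖e‖`. Hence `‖A⁻¹ e‖ ≤ K ‖e‖`, and the bound on the induced
`‖·‖_∞` norm follows as for any operator norm. -/

open Matrix

/-- Induced matrix max-norm (maximum row sum of absolute values). -/
noncomputable def matNormInf (M : Matrix (Fin 2) (Fin 2) ℝ) : ℝ :=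
  max (|M 0 0| + |M 0 1|) (|M 1 0| + |M 1 1|)

section

variable {E : Type*} [NormedAddCommGroup E] [NormedSpace ℝ E]

theorem le_of_forall_pos_mul_le_mul_add {a b M : ℝ} (h : ∀ T > 0, T * a ≤ T * b + M) :
    a ≤ b := by
  by_contra! hba
  set T := (|M| + 1) / (a - b)
  have hT : T * (a - b) = |M| + 1 := div_mul_cancel₀ _ (sub_ne_zero.2 hba.ne')
  nlinarith [h T (div_pos (by positivity) (sub_pos.2 hba)), le_abs_self M]

theorem norm_le_of_forall_norm_sub_le_of_hasDerivAt {c : E} {f F : ℝ → E} {K M : ℝ}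
    (hF : ∀ t, HasDerivAt F (f t) t) (hF_bdd : ∀ t, ‖F t‖ ≤ M) (hc : ∀ t, ‖c - f t‖ ≤ K) :
    ‖c‖ ≤ K := by
  refine le_of_forall_pos_mul_le_mul_add (M := 2 * M) fun T hT => ?_
  have hG : ∀ t, HasDerivAt (fun u : ℝ => u • c - F u) (c - f t) t := fun t => by
    simpa only [one_smul] using ((hasDerivAt_id' t).smul_const c).fun_sub (hF t)
  have hMVT : ‖(T • c - F T) - ((0 : ℝ) • c - F 0)‖ ≤ K * ‖T - 0‖ :=
    convex_univ.norm_image_sub_le_of_norm_hasDerivWithin_le (fun t _ => (hG t).hasDerivWithinAt)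
      (fun t _ => hc t) (Set.mem_univ _) (Set.mem_univ _)
  rw [sub_zero, Real.norm_of_nonneg hT.le] at hMVT
  calc T * ‖c‖ = ‖T • c‖ := by rw [norm_smul, Real.norm_of_nonneg hT.le]
    _ = ‖((T • c - F T) - ((0 : ℝ) • c - F 0)) + (F T - F 0)‖ := by
        congr 1; rw [zero_smul]; abel
    _ ≤ K * T + (M + M) :=
        norm_add_le_of_le hMVT ((norm_sub_le _ _).trans (add_le_add (hF_bdd T) (hF_bdd 0)))
    _ = T * K + 2 * M := by ring

end

section HyersUlam

variable {m n : Type*} [Fintype m] [Fintype n]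

variable [DecidableEq n] in
def IsHyersUlamStable (A : Matrix n n ℝ) (K : ℝ) : Prop :=
  ∀ ε > (0:ℝ), ∀ φ : ℝ → (n → ℝ), Differentiable ℝ φ →
    (∀ t : ℝ, ‖deriv φ t - A *ᵥ φ t‖ ≤ ε) →
    ∃ x₀ : n → ℝ, ∀ t : ℝ, ‖φ t - NormedSpace.exp (t • A) *ᵥ x₀‖ ≤ K * ε

theorem HasDerivAt.const_mulVec {x : ℝ → n → ℝ} {x' : n → ℝ} {t : ℝ} (M : Matrix m n ℝ)
    (hx : HasDerivAt x x' t) : HasDerivAt (fun u => M *ᵥ x u) (M *ᵥ x') t :=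
  (mulVecLin M).toContinuousLinearMap.hasFDerivAt.comp_hasDerivAt t hx

attribute [local instance] Matrix.linftyOpNormedAddCommGroup Matrix.linftyOpNormedSpace
  Matrix.linftyOpNormedRing Matrix.linftyOpNormedAlgebra

theorem HasDerivAt.mulVec_const {Φ : ℝ → Matrix m n ℝ} {Φ' : Matrix m n ℝ} {t : ℝ} (v : n → ℝ)
    (hΦ : HasDerivAt Φ Φ' t) : HasDerivAt (fun u => Φ u *ᵥ v) (Φ' *ᵥ v) t :=
  (((mulVecBilin ℝ ℝ : Matrix m n ℝ →ₗ[ℝ] (n → ℝ) →ₗ[ℝ] m → ℝ).flip v).toContinuousLinearMap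
    |>.hasFDerivAt).comp_hasDerivAt t hΦ

variable [DecidableEq n]

theorem hasDerivAt_exp_smul_mulVec (A : Matrix n n ℝ) (x₀ : n → ℝ) (t : ℝ) :
    HasDerivAt (fun u : ℝ => NormedSpace.exp (u • A) *ᵥ x₀)
      (A *ᵥ (NormedSpace.exp (t • A) *ᵥ x₀)) t := by
  have h := (hasDerivAt_exp_smul_const' A t).mulVec_const x₀
  rw [← mulVec_mulVec] at h
  exact h

theorem norm_le_of_forall_norm_sub_exp_smul_mulVec_le {A : Matrix n n ℝ} (hA : IsUnit A.det)
    {c x₀ : n → ℝ} {K : ℝ} (h : ∀ t : ℝ, ‖c - NormedSpace.exp (t • A) *ᵥ x₀‖ ≤ K) : ‖c‖ ≤ K := by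
  refine norm_le_of_forall_norm_sub_le_of_hasDerivAt
    (F := fun t => A⁻¹ *ᵥ (NormedSpace.exp (t • A) *ᵥ x₀)) (M := ‖A⁻¹‖ * (‖c‖ + K))
    (fun t => ?_) (fun t => ?_) h
  · have h := (hasDerivAt_exp_smul_mulVec A x₀ t).const_mulVec A⁻¹
    rwa [mulVec_mulVec (NormedSpace.exp (t • A) *ᵥ x₀) A⁻¹ A, nonsing_inv_mul A hA, one_mulVec] at h
  · refine (linfty_opNorm_mulVec _ _).trans (mul_le_mul_of_nonneg_left ?_ (norm_nonneg _))
    calc ‖NormedSpace.exp (t • A) *ᵥ x₀‖ ≤ ‖c‖ + ‖c - NormedSpace.exp (t • A) *ᵥ x₀‖ := by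
          simpa using norm_sub_le c (c - NormedSpace.exp (t • A) *ᵥ x₀)
      _ ≤ ‖c‖ + K := add_le_add_right (h t) _

theorem IsHyersUlamStable.norm_inv_mulVec_le {A : Matrix n n ℝ} {K : ℝ}
    (hK : IsHyersUlamStable A K) (hA : IsUnit A.det) {e : n → ℝ} (he : e ≠ 0) :
    ‖A⁻¹ *ᵥ e‖ ≤ K * ‖e‖ := by
  obtain ⟨x₀, hx₀⟩ := hK ‖e‖ (norm_pos_iff.2 he) (fun _ => A⁻¹ *ᵥ e) (differentiable_const _)
    fun t => by simp [mulVec_mulVec, mul_nonsing_inv A hA]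
  exact norm_le_of_forall_norm_sub_exp_smul_mulVec_le hA hx₀

theorem IsHyersUlamStable.linfty_opNorm_inv_le [Nonempty n] {A : Matrix n n ℝ} {K : ℝ}
    (hK : IsHyersUlamStable A K) (hA : IsUnit A.det) : ‖A⁻¹‖ ≤ K := by
  have hK₀ : 0 ≤ K := by
    simpa using (norm_nonneg _).trans (hK.norm_inv_mulVec_le hA (one_ne_zero (α := n → ℝ)))
  rw [linfty_opNorm_eq_opNorm]
  exact ContinuousLinearMap.opNorm_le_bound' _ hK₀ fun e he =>
    hK.norm_inv_mulVec_le hA (norm_ne_zero_iff.1 he)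

theorem matNormInf_eq_linfty_opNorm (M : Matrix (Fin 2) (Fin 2) ℝ) : matNormInf M = ‖M‖ := by
  rw [linfty_opNorm_def]
  simp [matNormInf, Fin.univ_succ]

end HyersUlam

theorem stmt_5 (A : Matrix (Fin 2) (Fin 2) ℝ)
    (heig : ∀ μ : ℂ, μ ^ 2 - (A.trace : ℂ) * μ + (A.det : ℂ) = 0 → μ.re ≠ 0)
    (K : ℝ)
    (hK : ∀ ε > (0:ℝ), ∀ φ : ℝ → (Fin 2 → ℝ), Differentiable ℝ φ →
      (∀ t : ℝ, ‖deriv φ t - A.mulVec (φ t)‖ ≤ ε) →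
      ∃ x₀ : Fin 2 → ℝ, ∀ t : ℝ,
        ‖φ t - (NormedSpace.exp (t • A)).mulVec x₀‖ ≤ K * ε) :
    (∀ e : Fin 2 → ℝ, ‖e‖ = 1 → K ≥ ‖A⁻¹.mulVec e‖) ∧ K ≥ matNormInf A⁻¹ := by
  have hA : IsUnit A.det := isUnit_iff_ne_zero.2 fun h => heig 0 (by simp [h]) rfl
  have hHU : IsHyersUlamStable A K := hK
  refine ⟨fun e he => ?_, ?_⟩
  · simpa [he] using hHU.norm_inv_mulVec_le hA (e := e) (norm_ne_zero_iff.1 (by simp [he]))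
  · rw [ge_iff_le, matNormInf_eq_linfty_opNorm]
    exact hHU.linfty_opNorm_inv_le hA
end

section
/- Let A be a 2×2 real matrix with distinct nonzero real eigenvalues λ₁ > λ₂ (of arbitrary signs), written A = [[a, b],[c, λ₁+λ₂−a]] with bc = (λ₁−a)(a−λ₂). Then x' = Ax is Hyers-Ulam stable on ℝ with constant K = (|λ₂|·max{|a−λ₂|+|b|, |c|+|λ₁−a|} + |λ₁|·max{|λ₁−a|+|b|, |c|+|a−λ₂|}) / (|λ₁λ₂|(λ₁−λ₂)). -/
/-!
Put `P = (λ₁ - λ₂)⁻¹ (A - λ₂)`. Since `(A - λ₁)(A - λ₂) = 0`, `P` is idempotent and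
`A = λ₁ P + λ₂ (1 - P)`, so `exp (tA) = e^{λ₁ t} P + e^{λ₂ t} (1 - P)`. If `‖φ' - Aφ‖ ≤ ε`, then
`y = Pφ` satisfies `‖y' - λ₁ y‖ ≤ ‖P‖ ε`, and any `y` with `‖y' - λy‖ ≤ δ`, `λ ≠ 0`, stays within
`δ / |λ|` of `e^{λt} c`, where `c` is the limit of `e^{-λt} y(t)` at `+∞` (or `-∞` if `λ < 0`).
That limit lies in the range of `P`; doing the same for `1 - P` and `λ₂` and adding gives `x₀`.
The two maxima in the constant are the row-sum norms of `(λ₁ - λ₂) P` and `(λ₁ - λ₂)(1 - P)`.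
-/

open Matrix Filter MeasureTheory Set Topology

section HyersUlam

variable {E : Type*} [NormedAddCommGroup E] [NormedSpace ℝ E] [CompleteSpace E]

theorem exists_mem_norm_sub_exp_smul_le_of_pos {lam δ : ℝ} (hlam : 0 < lam) {y : ℝ → E}
    (hy : Differentiable ℝ y) (hδ : ∀ t, ‖deriv y t - lam • y t‖ ≤ δ)
    {K : Submodule ℝ E} (hK : IsClosed (K : Set E)) (hyK : ∀ t, y t ∈ K) :
    ∃ c ∈ K, ∀ t, ‖y t - Real.exp (lam * t) • c‖ ≤ δ / lam := by
  set u : ℝ → E := fun t => Real.exp (-lam * t) • y t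
  set u' : ℝ → E := fun t => Real.exp (-lam * t) • (deriv y t - lam • y t)
  have hu : ∀ t, HasDerivAt u (u' t) t := fun t => by
    refine (((hasDerivAt_id t).const_mul (-lam)).exp.smul (hy t).hasDerivAt).congr_deriv ?_
    simp only [u', id, mul_one, smul_sub, smul_smul]
    module
  have hu'_le : ∀ t, ‖u' t‖ ≤ δ * Real.exp (-lam * t) := fun t => by
    rw [norm_smul, Real.norm_of_nonneg (Real.exp_pos _).le, mul_comm]
    exact mul_le_mul_of_nonneg_right (hδ t) (Real.exp_pos _).le
  have hu'_int : ∀ T, IntegrableOn u' (Ioi T) := fun T =>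
    ((integrableOn_exp_mul_Ioi (neg_neg_of_pos hlam) T).const_mul δ).mono'
      ((Real.continuous_exp.comp (continuous_const_mul _)).aestronglyMeasurable.smul
        ((stronglyMeasurable_deriv y).aestronglyMeasurable.sub
          (hy.continuous.aestronglyMeasurable.const_smul lam)))
      (ae_of_all _ hu'_le)
  obtain ⟨c, hc⟩ : ∃ c, Tendsto u atTop (𝓝 c) :=
    ⟨_, tendsto_limUnder_of_hasDerivAt_of_integrableOn_Ioi (fun t _ => hu t) (hu'_int 0)⟩
  refine ⟨c, hK.mem_of_tendsto hc (Eventually.of_forall fun t => K.smul_mem _ (hyK t)),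
    fun t => ?_⟩
  have hdist : ‖c - u t‖ ≤ δ * Real.exp (-lam * t) / lam := by
    rw [← integral_Ioi_of_hasDerivAt_of_tendsto' (fun s _ => hu s) (hu'_int t) hc]
    calc ‖∫ s in Ioi t, u' s‖ ≤ ∫ s in Ioi t, δ * Real.exp (-lam * s) :=
          norm_integral_le_of_norm_le
            ((integrableOn_exp_mul_Ioi (neg_neg_of_pos hlam) t).const_mul δ) (ae_of_all _ hu'_le)
      _ = δ * Real.exp (-lam * t) / lam := by
          rw [integral_const_mul, integral_exp_mul_Ioi (neg_neg_of_pos hlam)]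
          field_simp
  have hyc : y t - Real.exp (lam * t) • c = Real.exp (lam * t) • (u t - c) := by
    have : Real.exp (lam * t) * Real.exp (-lam * t) = 1 := by
      rw [← Real.exp_add, neg_mul, add_neg_cancel, Real.exp_zero]
    simp only [u, smul_sub, smul_smul, this, one_smul]
  calc ‖y t - Real.exp (lam * t) • c‖ = Real.exp (lam * t) * ‖c - u t‖ := by
        rw [hyc, norm_smul, norm_sub_rev, Real.norm_of_nonneg (Real.exp_pos _).le]
    _ ≤ Real.exp (lam * t) * (δ * Real.exp (-lam * t) / lam) := by gcongr
    _ = δ / lam := by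
        rw [neg_mul, Real.exp_neg]
        field_simp

theorem exists_mem_norm_sub_exp_smul_le {lam δ : ℝ} (hlam : lam ≠ 0) {y : ℝ → E}
    (hy : Differentiable ℝ y) (hδ : ∀ t, ‖deriv y t - lam • y t‖ ≤ δ)
    {K : Submodule ℝ E} (hK : IsClosed (K : Set E)) (hyK : ∀ t, y t ∈ K) :
    ∃ c ∈ K, ∀ t, ‖y t - Real.exp (lam * t) • c‖ ≤ δ / |lam| := by
  rcases hlam.lt_or_gt with hneg | hpos
  · have hδ' : ∀ t, ‖deriv (fun s => y (-s)) t - (-lam) • y (-t)‖ ≤ δ := fun t => by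
      rw [deriv_comp_neg, neg_smul, sub_neg_eq_add, ← norm_neg, neg_add', neg_neg]
      exact hδ (-t)
    obtain ⟨c, hcK, hc⟩ := exists_mem_norm_sub_exp_smul_le_of_pos (neg_pos.2 hneg)
      (hy.comp differentiable_neg) hδ' hK (fun t => hyK (-t))
    refine ⟨c, hcK, fun t => ?_⟩
    simpa [abs_of_neg hneg] using hc (-t)
  · simpa [abs_of_pos hpos] using exists_mem_norm_sub_exp_smul_le_of_pos hpos hy hδ hK hyK

end HyersUlam

section Projection

variable {𝕜 R : Type*} [Field 𝕜] [Ring R] [Algebra 𝕜 R]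

theorem isIdempotentElem_inv_smul_sub_smul_one {A : R} {l1 l2 : 𝕜} (h : l1 ≠ l2)
    (hA : (A - l1 • 1) * (A - l2 • 1) = 0) :
    IsIdempotentElem ((l1 - l2)⁻¹ • (A - l2 • 1)) := by
  have hd : l1 - l2 ≠ 0 := sub_ne_zero.2 h
  have hsq : (A - l2 • 1) * (A - l2 • 1) = (l1 - l2) • (A - l2 • 1) := by
    have : A - l2 • (1 : R) = (A - l1 • 1) + (l1 - l2) • 1 := by rw [sub_smul]; abel
    calc (A - l2 • 1) * (A - l2 • 1) = ((A - l1 • 1) + (l1 - l2) • 1) * (A - l2 • 1) := by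
          rw [← this]
      _ = (l1 - l2) • (A - l2 • 1) := by rw [add_mul, hA, zero_add, smul_one_mul]
  rw [IsIdempotentElem, smul_mul_smul_comm, hsq, smul_smul, mul_assoc, inv_mul_cancel₀ hd,
    mul_one]

theorem smul_inv_smul_sub_add_smul_one_sub (A : R) {l1 l2 : 𝕜} (h : l1 ≠ l2) :
    l1 • ((l1 - l2)⁻¹ • (A - l2 • 1)) + l2 • (1 - (l1 - l2)⁻¹ • (A - l2 • 1)) = A := by
  have hd : l1 - l2 ≠ 0 := sub_ne_zero.2 h
  rw [smul_sub l2, add_sub_left_comm, ← sub_smul, smul_smul, mul_inv_cancel₀ hd, one_smul]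
  abel

end Projection

section SpectralDecomposition

variable {𝕜 R : Type*} [CommRing 𝕜] [Ring R] [Algebra 𝕜 R] {P : R}

theorem IsIdempotentElem.mul_smul_add_smul_one_sub (hP : IsIdempotentElem P) (l1 l2 : 𝕜) :
    P * (l1 • P + l2 • (1 - P)) = l1 • P := by
  rw [mul_add, mul_smul_comm, mul_smul_comm, hP.eq, mul_sub, mul_one, hP.eq, sub_self,
    smul_zero, add_zero]

theorem IsIdempotentElem.one_sub_mul_smul_add_smul_one_sub (hP : IsIdempotentElem P)
    (l1 l2 : 𝕜) : (1 - P) * (l1 • P + l2 • (1 - P)) = l2 • (1 - P) := by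
  simpa only [sub_sub_cancel, add_comm] using hP.one_sub.mul_smul_add_smul_one_sub l2 l1

theorem IsIdempotentElem.pow_smul_add_smul_one_sub (hP : IsIdempotentElem P) (l1 l2 : 𝕜)
    (n : ℕ) : (l1 • P + l2 • (1 - P)) ^ n = l1 ^ n • P + l2 ^ n • (1 - P) := by
  induction n with
  | zero => simp
  | succ n ih =>
    rw [pow_succ', ih, add_mul, smul_mul_assoc, smul_mul_assoc, hP.mul_smul_add_smul_one_sub,
      hP.one_sub_mul_smul_add_smul_one_sub, smul_smul, smul_smul, pow_succ', pow_succ']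

end SpectralDecomposition

section Exp

open NormedSpace

variable {𝔸 : Type*} [NormedRing 𝔸] [NormedAlgebra ℝ 𝔸] [CompleteSpace 𝔸]

theorem IsIdempotentElem.exp_smul_add_smul_one_sub {P : 𝔸} (hP : IsIdempotentElem P)
    (l1 l2 : ℝ) : exp (l1 • P + l2 • (1 - P)) = Real.exp l1 • P + Real.exp l2 • (1 - P) := by
  have hsum := exp_series_hasSum_exp' (𝕂 := ℝ) (l1 • P + l2 • (1 - P))
  simp only [hP.pow_smul_add_smul_one_sub, smul_add, smul_smul] at hsum
  have hexp (l : ℝ) : HasSum (fun n => ((n.factorial : ℝ)⁻¹ * l ^ n)) (Real.exp l) := by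
    simpa only [Real.exp_eq_exp_ℝ, smul_eq_mul] using exp_series_hasSum_exp' (𝕂 := ℝ) l
  exact hsum.unique (((hexp l1).smul_const P).add ((hexp l2).smul_const (1 - P)))

end Exp

theorem Matrix.exp_smul_add_smul_one_sub_mulVec {n : Type*} [Fintype n] [DecidableEq n]
    {P : Matrix n n ℝ} (hP : IsIdempotentElem P) {c1 c2 : n → ℝ} (hc1 : P *ᵥ c1 = c1)
    (hc2 : (1 - P) *ᵥ c2 = c2) (l1 l2 : ℝ) :
    NormedSpace.exp (l1 • P + l2 • (1 - P)) *ᵥ (c1 + c2) = Real.exp l1 • c1 + Real.exp l2 • c2 := by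
  have hPc2 : P *ᵥ c2 = 0 := by
    rw [← hc2, mulVec_mulVec, mul_sub, mul_one, hP.eq, sub_self, zero_mulVec]
  have hQc1 : (1 - P) *ᵥ c1 = 0 := by rw [sub_mulVec, one_mulVec, hc1, sub_self]
  have hexp :
      NormedSpace.exp (l1 • P + l2 • (1 - P)) = Real.exp l1 • P + Real.exp l2 • (1 - P) := by
    -- `exp` does not depend on the norm; the operator norm just makes matrices a Banach algebra.
    open scoped Norms.Operator in exact hP.exp_smul_add_smul_one_sub l1 l2
  rw [hexp]
  simp only [add_mulVec, smul_mulVec, mulVec_add, hc1, hc2, hPc2, hQc1, smul_zero, add_zero,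
    zero_add]

theorem Matrix.exists_mulVec_eq_self_norm_mulVec_sub_exp_smul_le {n : Type*} [Fintype n]
    [DecidableEq n] {A P : Matrix n n ℝ} {lam ε C : ℝ} (hlam : lam ≠ 0) (hP : IsIdempotentElem P)
    (hPA : P * A = lam • P) (hC : 0 ≤ C) (hPv : ∀ v, ‖P *ᵥ v‖ ≤ C * ‖v‖)
    {φ : ℝ → n → ℝ} (hφ : Differentiable ℝ φ) (hφA : ∀ t, ‖deriv φ t - A *ᵥ φ t‖ ≤ ε) :
    ∃ c, P *ᵥ c = c ∧ ∀ t, ‖P *ᵥ φ t - Real.exp (lam * t) • c‖ ≤ C * ε / |lam| := by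
  let L : (n → ℝ) →L[ℝ] (n → ℝ) := LinearMap.toContinuousLinearMap (mulVecLin P)
  have hy : Differentiable ℝ (fun t => P *ᵥ φ t) := L.differentiable.comp hφ
  have hδ : ∀ t, ‖deriv (fun s => P *ᵥ φ s) t - lam • P *ᵥ φ t‖ ≤ C * ε := fun t => by
    have hderiv : deriv (fun s => P *ᵥ φ s) t = P *ᵥ deriv φ t :=
      (L.hasFDerivAt.comp_hasDerivAt t (hφ t).hasDerivAt).deriv
    rw [hderiv, ← smul_mulVec, ← hPA, ← mulVec_mulVec, ← mulVec_sub]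
    exact (hPv _).trans (mul_le_mul_of_nonneg_left (hφA t) hC)
  obtain ⟨c, ⟨w, rfl⟩, hc⟩ := exists_mem_norm_sub_exp_smul_le hlam hy hδ
    (K := LinearMap.range (mulVecLin P)) (Submodule.closed_of_finiteDimensional _)
    (fun t => ⟨φ t, rfl⟩)
  exact ⟨mulVecLin P w, by simp [mulVec_mulVec, hP.eq], hc⟩

theorem Matrix.norm_smul_mulVec_fin_two_le {k : ℝ} (hk : 0 ≤ k) (p q r s : ℝ) (v : Fin 2 → ℝ) :
    ‖(k • !![p, q; r, s]) *ᵥ v‖ ≤ k * max (|p| + |q|) (|r| + |s|) * ‖v‖ := by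
  rw [smul_mulVec, norm_smul, Real.norm_of_nonneg hk, mul_assoc]
  refine mul_le_mul_of_nonneg_left ?_ hk
  open scoped Norms.Operator in
  refine (linfty_opNorm_mulVec _ v).trans (le_of_eq ?_)
  rw [linfty_opNorm_def]
  simp [Fin.univ_succ, NNReal.coe_max, Real.norm_eq_abs]

theorem Matrix.fin_two_sub_smul_one_mul_sub_smul_one_eq_zero {R : Type*} [CommRing R]
    {a b c l1 l2 : R} (hbc : b * c = (l1 - a) * (a - l2)) :
    (!![a, b; c, l1 + l2 - a] - l1 • 1) * (!![a, b; c, l1 + l2 - a] - l2 • 1) = 0 := by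
  ext i j
  fin_cases i <;> fin_cases j <;> simp [mul_apply, Fin.sum_univ_two, one_apply]
  · linear_combination hbc
  · ring
  · ring
  · linear_combination hbc

theorem stmt_8 (a b c lam1 lam2 : ℝ)
    (h12 : lam1 > lam2) (h1 : lam1 ≠ 0) (h2 : lam2 ≠ 0)
    (hbc : b * c = (lam1 - a) * (a - lam2))
    (A : Matrix (Fin 2) (Fin 2) ℝ) (hA : A = !![a, b; c, lam1 + lam2 - a]) :
    ∀ ε > (0:ℝ), ∀ φ : ℝ → (Fin 2 → ℝ), Differentiable ℝ φ →
      (∀ t : ℝ, ‖deriv φ t - A.mulVec (φ t)‖ ≤ ε) →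
      ∃ x₀ : Fin 2 → ℝ, ∀ t : ℝ,
        ‖φ t - (NormedSpace.exp (t • A)).mulVec x₀‖ ≤
          ((|lam2| * max (|a - lam2| + |b|) (|c| + |lam1 - a|) +
            |lam1| * max (|lam1 - a| + |b|) (|c| + |a - lam2|)) /
            (|lam1 * lam2| * (lam1 - lam2))) * ε := by
  intro ε hε φ hφ hφA
  have hd : 0 < lam1 - lam2 := sub_pos.2 h12
  set P := (lam1 - lam2)⁻¹ • (A - lam2 • 1) with hP_def
  have hP : IsIdempotentElem P := isIdempotentElem_inv_smul_sub_smul_one h12.ne'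
    (hA ▸ fin_two_sub_smul_one_mul_sub_smul_one_eq_zero hbc)
  have hAP : lam1 • P + lam2 • (1 - P) = A := smul_inv_smul_sub_add_smul_one_sub A h12.ne'
  have hP_eq : P = (lam1 - lam2)⁻¹ • !![a - lam2, b; c, lam1 - a] := by
    rw [hP_def, hA]; congr 1; ext i j; fin_cases i <;> fin_cases j <;> simp [one_apply]; ring
  have hQ_eq : 1 - P = (lam1 - lam2)⁻¹ • !![lam1 - a, -b; -c, a - lam2] := by
    rw [hP_eq]; ext i j; fin_cases i <;> fin_cases j <;> simp [one_apply] <;> field_simp <;> ring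
  clear_value P
  obtain ⟨c1, hPc1, hc1⟩ := exists_mulVec_eq_self_norm_mulVec_sub_exp_smul_le h1 hP
    (by rw [← hAP, hP.mul_smul_add_smul_one_sub]) (by positivity)
    (hP_eq ▸ norm_smul_mulVec_fin_two_le (by positivity) _ _ _ _) hφ hφA
  obtain ⟨c2, hQc2, hc2⟩ := exists_mulVec_eq_self_norm_mulVec_sub_exp_smul_le h2 hP.one_sub
    (by rw [← hAP, hP.one_sub_mul_smul_add_smul_one_sub]) (by positivity)
    (hQ_eq ▸ norm_smul_mulVec_fin_two_le (by positivity) _ _ _ _) hφ hφA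
  refine ⟨c1 + c2, fun t => ?_⟩
  rw [← hAP, smul_add, smul_smul, smul_smul, mul_comm t, mul_comm t,
    exp_smul_add_smul_one_sub_mulVec hP hPc1 hQc2]
  calc ‖φ t - (Real.exp (lam1 * t) • c1 + Real.exp (lam2 * t) • c2)‖
      = ‖(P *ᵥ φ t - Real.exp (lam1 * t) • c1) + ((1 - P) *ᵥ φ t - Real.exp (lam2 * t) • c2)‖ := by
        rw [sub_mulVec, one_mulVec]; congr 1; abel
    _ ≤ _ := norm_add_le_of_le (hc1 t) (hc2 t)
    _ = _ := by rw [abs_mul, abs_neg, abs_neg]; field_simp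
end

section
/- Let A be a 2×2 real matrix with eigenvalues α ± iβ, α ≠ 0, β > 0. Then x' = Ax is Hyers-Ulam stable on ℝ with constant K = √(β² + (|a−α| + max{|b|,|c|})²) / (|α|β), where a, b, c are the entries of A = [[a, b],[c, 2α−a]]. -/
/-!
Write `B = A - α I`. The eigenvalue condition says `B² = -β² I`, so summing the exponential
series gives `exp (tA) = e^{αt} (cos (βt) I + (sin (βt) / β) B)`. Since `‖B v‖ ≤ m ‖v‖` with
`m = |a - α| + max |b| |c|`, this yields `‖exp (tA)‖ ≤ C e^{αt}` with `C = √(β² + m²) / β`.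

For `α > 0` and an `ε`-approximate solution `φ`, the curve `ψ s = exp (-sA) (φ s)` has
derivative `exp (-sA) (φ' s - A φ s) = O(ε e^{-αs})`, so it converges to some `x₀`, and
`φ t - exp (tA) x₀ = -∫_t^∞ exp ((t - s)A) (φ' s - A φ s) ds` has norm at most `Cε/α`.
The case `α < 0` follows by reversing time, which replaces `A` by `-A`.
-/

open NormedSpace MeasureTheory Filter Set
open scoped Matrix

section NormedAlgebra

variable {𝔸 : Type*} [NormedRing 𝔸] [NormedAlgebra ℝ 𝔸]

theorem exp_smul_of_mul_self_eq {β : ℝ} (hβ : β ≠ 0) {B : 𝔸}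
    (hB : B * B = -(β ^ 2) • 1) (t : ℝ) :
    exp (t • B) = Real.cos (β * t) • 1 + (Real.sin (β * t) / β) • B := by
  have hpow (k : ℕ) : B ^ (2 * k) = (-(β ^ 2)) ^ k • 1 := by
    rw [pow_mul, sq, hB, smul_pow, one_pow]
  rw [exp_eq_tsum ℝ]
  refine HasSum.tsum_eq (HasSum.even_add_odd ?_ ?_)
  · convert (Real.hasSum_cos (β * t)).smul_const (1 : 𝔸) using 2 with k
    rw [smul_pow, hpow, smul_smul, smul_smul, neg_pow, ← pow_mul, mul_pow]
    field_simp
  · convert ((Real.hasSum_sin (β * t)).div_const β).smul_const B using 2 with k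
    rw [smul_pow, pow_succ B, hpow, smul_mul_assoc, one_mul, smul_smul, smul_smul, neg_pow,
      ← pow_mul, mul_pow]
    congr 1
    field_simp
    ring

theorem exp_smul_of_sub_mul_self_eq [CompleteSpace 𝔸] {α β : ℝ} (hβ : β ≠ 0) {A : 𝔸}
    (hA : (A - α • 1) * (A - α • 1) = -(β ^ 2) • 1) (t : ℝ) :
    exp (t • A) = Real.exp (α * t) •
      (Real.cos (β * t) • 1 + (Real.sin (β * t) / β) • (A - α • 1)) := by
  have hsplit : t • A = algebraMap ℝ 𝔸 (α * t) + t • (A - α • 1) := by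
    rw [Algebra.algebraMap_eq_smul_one]; module
  -- `exp_add_of_commute` is stated for Banach algebras over `ℚ`.
  let _ : NormedAlgebra ℚ 𝔸 := .restrictScalars ℚ ℝ 𝔸
  rw [hsplit, exp_add_of_commute (Algebra.commutes _ _), ← algebraMap_exp_comm,
    ← Real.exp_eq_exp_ℝ, exp_smul_of_mul_self_eq hβ hA, Algebra.algebraMap_eq_smul_one,
    smul_mul_assoc, one_mul]

end NormedAlgebra

theorem mul_abs_cos_add_mul_abs_sin_le (x y θ : ℝ) :
    x * |Real.cos θ| + y * |Real.sin θ| ≤ √(x ^ 2 + y ^ 2) := by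
  refine (le_abs_self _).trans (Real.abs_le_sqrt ?_)
  nlinarith [sq_nonneg (x * |Real.sin θ| - y * |Real.cos θ|), sq_abs (Real.sin θ),
    sq_abs (Real.cos θ), Real.sin_sq_add_cos_sq θ]

theorem exp_mul_sub_eq (α t s : ℝ) :
    Real.exp (α * (t - s)) = Real.exp (α * t) * Real.exp (-α * s) := by
  rw [← Real.exp_add]; ring_nf

theorem integrableOn_Ioi_exp_mul_sub {α : ℝ} (hα : 0 < α) (t : ℝ) :
    IntegrableOn (fun s => Real.exp (α * (t - s))) (Ioi t) := by
  simp_rw [exp_mul_sub_eq]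
  exact (integrableOn_exp_mul_Ioi (neg_lt_zero.2 hα) t).const_mul _

theorem integral_Ioi_exp_mul_sub {α : ℝ} (hα : 0 < α) (t : ℝ) :
    ∫ s in Ioi t, Real.exp (α * (t - s)) = α⁻¹ := by
  simp_rw [exp_mul_sub_eq]
  rw [integral_const_mul, integral_exp_mul_Ioi (neg_lt_zero.2 hα), neg_div_neg_eq, mul_div_assoc',
    ← Real.exp_add, neg_mul, add_neg_cancel, Real.exp_zero, one_div]

section BanachSpace

variable {E : Type*} [NormedAddCommGroup E] [NormedSpace ℝ E]

theorem norm_exp_smul_le_of_sub_mul_self_eq [CompleteSpace E] {α β m : ℝ} (hβ : 0 < β)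
    {A : E →L[ℝ] E} (hA : (A - α • 1) * (A - α • 1) = -(β ^ 2) • 1)
    (hm : ∀ v, ‖(A - α • 1) v‖ ≤ m * ‖v‖) (u : ℝ) :
    ‖exp (u • A)‖ ≤ √(β ^ 2 + m ^ 2) / β * Real.exp (α * u) := by
  refine ContinuousLinearMap.opNorm_le_bound _ (by positivity) fun v => ?_
  rw [exp_smul_of_sub_mul_self_eq hβ.ne' hA]
  simp only [smul_apply, add_apply, one_apply_eq_self]
  set θ := β * u
  calc ‖Real.exp (α * u) • (Real.cos θ • v + (Real.sin θ / β) • (A - α • 1) v)‖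
      ≤ Real.exp (α * u) * (|Real.cos θ| * ‖v‖ + |Real.sin θ / β| * (m * ‖v‖)) := by
        rw [norm_smul, Real.norm_of_nonneg (Real.exp_nonneg _)]
        gcongr
        refine norm_add_le_of_le (by rw [norm_smul, Real.norm_eq_abs]) ?_
        rw [norm_smul, Real.norm_eq_abs]
        gcongr
        exact hm v
    _ = (β * |Real.cos θ| + m * |Real.sin θ|) / β * Real.exp (α * u) * ‖v‖ := by
        rw [abs_div, abs_of_pos hβ]
        field_simp
    _ ≤ √(β ^ 2 + m ^ 2) / β * Real.exp (α * u) * ‖v‖ := by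
        gcongr
        exact mul_abs_cos_add_mul_abs_sin_le β m θ

theorem exp_smul_apply_exp_smul_apply [CompleteSpace E] (A : E →L[ℝ] E) (s t : ℝ) (v : E) :
    exp (s • A) (exp (t • A) v) = exp ((s + t) • A) v := by
  let _ : NormedAlgebra ℚ (E →L[ℝ] E) := .restrictScalars ℚ ℝ _
  rw [add_smul, exp_add_of_commute (((Commute.refl A).smul_left s).smul_right t)]
  rfl

theorem hasDerivAt_exp_neg_smul_apply [CompleteSpace E] (A : E →L[ℝ] E) {φ : ℝ → E} {φ' : E}
    {t : ℝ} (hφ : HasDerivAt φ φ' t) :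
    HasDerivAt (fun s => exp ((-s) • A) (φ s)) (exp ((-t) • A) (φ' - A (φ t))) t := by
  convert ((hasDerivAt_exp_smul_const A (-t)).scomp t (hasDerivAt_neg t)).clm_apply hφ using 1
  · rfl
  · rw [neg_one_smul, neg_apply, mul_apply_eq_comp, Function.comp_apply, map_sub]
    abel

def HyersUlamStable (A : E →L[ℝ] E) (K : ℝ) : Prop :=
  ∀ ε : ℝ, ∀ φ : ℝ → E, Differentiable ℝ φ → (∀ t, ‖deriv φ t - A (φ t)‖ ≤ ε) →
    ∃ x₀ : E, ∀ t, ‖φ t - exp (t • A) x₀‖ ≤ K * ε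

theorem HyersUlamStable.neg {A : E →L[ℝ] E} {K : ℝ} (h : HyersUlamStable A K) :
    HyersUlamStable (-A) K := by
  intro ε φ hφ hε
  have hderiv (t : ℝ) : deriv (fun s => φ (-s)) t = -deriv φ (-t) := by
    simpa [Function.comp_def] using ((hφ (-t)).hasDerivAt.scomp t (hasDerivAt_neg t)).deriv
  obtain ⟨x₀, hx₀⟩ := h ε (fun s => φ (-s)) (hφ.comp differentiable_neg) fun t => by
    rw [hderiv, ← norm_neg]
    simpa [sub_eq_add_neg, add_comm] using hε (-t)
  exact ⟨x₀, fun t => by simpa using hx₀ (-t)⟩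

theorem HyersUlamStable.of_norm_exp_smul_le_of_pos [CompleteSpace E] {A : E →L[ℝ] E} {α C : ℝ}
    (hα : 0 < α) (hexp : ∀ u, ‖exp (u • A)‖ ≤ C * Real.exp (α * u)) :
    HyersUlamStable A (C / α) := by
  intro ε φ hφ hε
  set y := fun s => deriv φ s - A (φ s)
  set ψ := fun s => exp ((-s) • A) (φ s)
  set g := fun s => exp ((-s) • A) (y s)
  have hψ (s : ℝ) : HasDerivAt ψ (g s) s := hasDerivAt_exp_neg_smul_apply A (hφ s).hasDerivAt
  have hbound (u s : ℝ) : ‖exp (u • A) (y s)‖ ≤ C * ε * Real.exp (α * u) := by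
    have hC : 0 ≤ C * Real.exp (α * u) := (norm_nonneg _).trans (hexp u)
    calc ‖exp (u • A) (y s)‖ ≤ C * Real.exp (α * u) * ‖y s‖ :=
          (ContinuousLinearMap.le_opNorm _ _).trans (by gcongr; exact hexp u)
      _ ≤ C * Real.exp (α * u) * ε := by gcongr; exact hε s
      _ = C * ε * Real.exp (α * u) := by ring
  have hg (a : ℝ) : IntegrableOn g (Ioi a) := by
    have hgd : deriv ψ = g := funext fun s => (hψ s).deriv
    refine Integrable.mono' ((exp_neg_integrableOn_Ioi a hα).const_mul (C * ε))
      (hgd ▸ aestronglyMeasurable_deriv ψ _) (ae_of_all _ fun s => (hbound (-s) s).trans_eq ?_)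
    rw [neg_mul, mul_neg]
  have hlim := tendsto_limUnder_of_hasDerivAt_of_integrableOn_Ioi (fun s _ => hψ s) (hg 0)
  refine ⟨limUnder atTop ψ, fun t => ?_⟩
  have hint : ∫ s in Ioi t, g s = limUnder atTop ψ - ψ t :=
    integral_Ioi_of_hasDerivAt_of_tendsto' (fun s _ => hψ s) (hg t) hlim
  have hφt : φ t = exp (t • A) (ψ t) := by
    rw [exp_smul_apply_exp_smul_apply, add_neg_cancel, zero_smul, exp_zero, one_apply_eq_self]
  have hcomp (s : ℝ) : exp (t • A) (g s) = exp ((t - s) • A) (y s) := by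
    rw [exp_smul_apply_exp_smul_apply, sub_eq_add_neg]
  calc ‖φ t - exp (t • A) (limUnder atTop ψ)‖
      = ‖∫ s in Ioi t, exp ((t - s) • A) (y s)‖ := by
        rw [hφt, ← map_sub, ← norm_neg, ← map_neg, neg_sub, ← hint,
          ← ContinuousLinearMap.integral_comp_comm _ (hg t)]
        simp only [hcomp]
    _ ≤ ∫ s in Ioi t, C * ε * Real.exp (α * (t - s)) :=
        norm_integral_le_of_norm_le ((integrableOn_Ioi_exp_mul_sub hα t).const_mul _)
          (ae_of_all _ fun s => hbound _ s)
    _ = C / α * ε := by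
        rw [integral_const_mul, integral_Ioi_exp_mul_sub hα]
        ring

theorem HyersUlamStable.of_norm_exp_smul_le [CompleteSpace E] {A : E →L[ℝ] E} {α C : ℝ}
    (hα : α ≠ 0) (hexp : ∀ u, ‖exp (u • A)‖ ≤ C * Real.exp (α * u)) :
    HyersUlamStable A (C / |α|) := by
  rcases hα.lt_or_gt with hneg | hpos
  · have h := of_norm_exp_smul_le_of_pos (A := -A) (neg_pos.2 hneg) fun u => by
      simpa using hexp (-u)
    simpa [abs_of_neg hneg] using h.neg
  · simpa [abs_of_pos hpos] using of_norm_exp_smul_le_of_pos hpos hexp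

end BanachSpace

namespace Matrix

variable {n : Type*} [Fintype n] [DecidableEq n]

noncomputable def toContinuousLinearMapAlgEquiv' :
    Matrix n n ℝ ≃ₐ[ℝ] ((n → ℝ) →L[ℝ] (n → ℝ)) :=
  Matrix.toLinAlgEquiv'.trans (Module.End.toContinuousLinearMap (n → ℝ))

theorem toContinuousLinearMapAlgEquiv'_apply (M : Matrix n n ℝ) (v : n → ℝ) :
    toContinuousLinearMapAlgEquiv' M v = M *ᵥ v :=
  rfl

theorem exp_mulVec (M : Matrix n n ℝ) (v : n → ℝ) :
    exp M *ᵥ v = exp (toContinuousLinearMapAlgEquiv' M) v := by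
  -- `map_exp` needs a Banach-algebra norm on matrices; `exp` itself does not depend on it.
  open scoped Norms.Operator in
  rw [← map_exp _ (LinearMap.continuous_of_finiteDimensional
    toContinuousLinearMapAlgEquiv'.toLinearMap)]
  rfl

theorem fin_two_sub_smul_one_mul_self_eq {a b c α β : ℝ}
    (h : (α - a) ^ 2 + b * c + β ^ 2 = 0) :
    (!![a, b; c, 2 * α - a] - α • 1) * (!![a, b; c, 2 * α - a] - α • 1) =
      -(β ^ 2) • (1 : Matrix (Fin 2) (Fin 2) ℝ) := by
  ext i j
  fin_cases i <;> fin_cases j <;>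
    simp [mul_apply, Fin.sum_univ_two, one_apply] <;> linarith

theorem norm_mulVec_fin_two_le (M : Matrix (Fin 2) (Fin 2) ℝ) {m : ℝ}
    (h0 : |M 0 0| + |M 0 1| ≤ m) (h1 : |M 1 0| + |M 1 1| ≤ m) (v : Fin 2 → ℝ) :
    ‖M *ᵥ v‖ ≤ m * ‖v‖ := by
  have hv (j : Fin 2) : |v j| ≤ ‖v‖ := norm_le_pi_norm v j
  have hrow (i : Fin 2) (hi : |M i 0| + |M i 1| ≤ m) : |(M *ᵥ v) i| ≤ m * ‖v‖ :=
    calc |(M *ᵥ v) i| ≤ |M i 0| * |v 0| + |M i 1| * |v 1| := by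
          simpa [mulVec, dotProduct, Fin.sum_univ_two, abs_mul] using
            abs_add_le (M i 0 * v 0) (M i 1 * v 1)
      _ ≤ (|M i 0| + |M i 1|) * ‖v‖ := by
          rw [add_mul]; gcongr <;> exact hv _
      _ ≤ m * ‖v‖ := by gcongr
  refine (pi_norm_le_iff_of_nonneg ((abs_nonneg _).trans (hrow 0 h0))).2 fun i => ?_
  fin_cases i
  exacts [hrow 0 h0, hrow 1 h1]

end Matrix

theorem stmt_10 (a b c alpha beta : ℝ)
    (halpha : alpha ≠ 0) (hbeta : beta > 0)
    (h : (alpha - a) ^ 2 + b * c + beta ^ 2 = 0)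
    (A : Matrix (Fin 2) (Fin 2) ℝ) (hA : A = !![a, b; c, 2 * alpha - a]) :
    ∀ ε > (0:ℝ), ∀ φ : ℝ → (Fin 2 → ℝ), Differentiable ℝ φ →
      (∀ t : ℝ, ‖deriv φ t - A.mulVec (φ t)‖ ≤ ε) →
      ∃ x₀ : Fin 2 → ℝ, ∀ t : ℝ,
        ‖φ t - (NormedSpace.exp (t • A)).mulVec x₀‖ ≤
          (Real.sqrt (beta ^ 2 + (|a - alpha| + max |b| |c|) ^ 2) / (|alpha| * beta)) * ε := by
  intro ε _ φ hφ hε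
  set Φ := Matrix.toContinuousLinearMapAlgEquiv' (n := Fin 2)
  have hB : Φ A - alpha • 1 = Φ (A - alpha • 1) := by rw [map_sub, map_smul, map_one]
  have hsq : (Φ A - alpha • 1) * (Φ A - alpha • 1) = -(beta ^ 2) • 1 := by
    rw [hB, ← map_mul, hA, Matrix.fin_two_sub_smul_one_mul_self_eq h, map_smul, map_one]
  have hm (v : Fin 2 → ℝ) : ‖(Φ A - alpha • 1) v‖ ≤ (|a - alpha| + max |b| |c|) * ‖v‖ := by
    rw [hB, Matrix.toContinuousLinearMapAlgEquiv'_apply, hA]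
    refine Matrix.norm_mulVec_fin_two_le _ ?_ ?_ v
    · simp
    · simp [show 2 * alpha - a - alpha = -(a - alpha) by ring, add_comm |c|,
        abs_sub_comm alpha a]
  obtain ⟨x₀, hx₀⟩ := HyersUlamStable.of_norm_exp_smul_le halpha
    (norm_exp_smul_le_of_sub_mul_self_eq hbeta hsq hm) ε φ hφ hε
  refine ⟨x₀, fun t => ?_⟩
  rw [Matrix.exp_mulVec, map_smul, mul_comm |alpha|, ← div_div]
  exact hx₀ t
end

section
/- Let A be a 2×2 real matrix having 0 as an eigenvalue. Then the system x'(t) = Ax(t) is not Hyers-Ulam stable on ℝ: there exists ε > 0 and a differentiable φ: ℝ → ℝ² with ‖φ'(t) − Aφ(t)‖_∞ ≤ ε for all t, such that for every solution x of x' = Ax, sup_{t∈ℝ} ‖φ(t) − x(t)‖_∞ = ∞. -/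
/-!
A row vector `w ≠ 0` with `w A = 0` exists because `det A = 0`, and `w ⬝ x(t)` is constant along
every solution `x(t) = exp(tA) x₀`. By Cayley–Hamilton `A² = (tr A) A`, which yields `u` with
`A² u = 0` and `w ⬝ u = w ⬝ w > 0`. The curve `φ(t) = t u + (t²/2) A u` solves `φ' = A φ + u`, so
its defect is the constant `u`, while `w ⬝ φ(t) = t (w ⬝ u)` grows linearly. Since `w ⬝ ·` is a
bounded functional, `‖φ(t) - x(t)‖ → ∞`.
-/

open Matrix

open Filter Asymptotics

namespace Matrix

variable {n : Type*} [Fintype n]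

theorem mul_self_eq_trace_smul_of_det_eq_zero {R : Type*} [CommRing R] [Nontrivial R]
    {A : Matrix (Fin 2) (Fin 2) R} (hA : A.det = 0) : A * A = A.trace • A := by
  have h := A.aeval_self_charpoly
  rw [charpoly_fin_two, hA] at h
  simpa [sq, sub_eq_zero, Algebra.smul_def] using h

attribute [local instance] Matrix.linftyOpNormedRing Matrix.linftyOpNormedAlgebra in
theorem vecMul_exp_eq_self {𝕂 : Type*} [RCLike 𝕂] [DecidableEq n] {A : Matrix n n 𝕂}
    {w : n → 𝕂} (hwA : w ᵥ* A = 0) : w ᵥ* NormedSpace.exp A = w := by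
  have hs := (NormedSpace.exp_series_hasSum_exp' (𝕂 := 𝕂) A).map (vecMulBilin 𝕂 𝕂 w)
    (continuous_const.matrix_vecMul continuous_id)
  refine (hs.unique (hasSum_single 0 fun k hk => ?_)).trans (by simp)
  obtain ⟨k, rfl⟩ := Nat.exists_eq_succ_of_ne_zero hk
  simp [pow_succ', ← vecMul_vecMul, hwA]

theorem exists_mulVec_mulVec_eq_zero_and_dotProduct_eq {K : Type*} [Field K]
    {A : Matrix (Fin 2) (Fin 2) K} (hA : A.det = 0) {w : Fin 2 → K} (hwA : w ᵥ* A = 0) :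
    ∃ u, A *ᵥ (A *ᵥ u) = 0 ∧ w ⬝ᵥ u = w ⬝ᵥ w := by
  have hsq (v : Fin 2 → K) : A *ᵥ (A *ᵥ v) = A.trace • A *ᵥ v := by
    rw [mulVec_mulVec, mul_self_eq_trace_smul_of_det_eq_zero hA, smul_mulVec]
  -- If `tr A ≠ 0` then `A *ᵥ u = 0`; if `tr A = 0` then `u = w` (as `0⁻¹ = 0`) and `A * A = 0`.
  refine ⟨w - A.trace⁻¹ • A *ᵥ w, ?_, ?_⟩
  · rw [hsq, mulVec_sub, mulVec_smul, hsq, smul_sub, smul_smul, smul_smul,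
      mul_inv_mul_cancel, sub_self]
  · rw [dotProduct_sub, dotProduct_smul, dotProduct_mulVec, hwA, zero_dotProduct, smul_zero,
      sub_zero]

theorem hasDerivAt_smul_add_sq_smul_mulVec (A : Matrix n n ℝ) {u : n → ℝ}
    (hu : A *ᵥ (A *ᵥ u) = 0) (t : ℝ) :
    HasDerivAt (fun s : ℝ => s • u + (s ^ 2 / 2) • A *ᵥ u)
      (A *ᵥ (t • u + (t ^ 2 / 2) • A *ᵥ u) + u) t := by
  refine (((hasDerivAt_id t).smul_const u).add
    (((hasDerivAt_pow 2 t).div_const 2).smul_const (A *ᵥ u))).congr_deriv ?_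
  simp only [mulVec_add, mulVec_smul, hu, smul_zero, add_zero, one_smul]
  module

end Matrix

theorem tendsto_norm_atTop_of_tendsto_dotProduct {n α : Type*} [Fintype n] {l : Filter α}
    {f : α → n → ℝ} (w : n → ℝ) (h : Tendsto (fun x => w ⬝ᵥ f x) l atTop) :
    Tendsto (fun x => ‖f x‖) l atTop := by
  simpa using (((LinearMap.toContinuousLinearMap (dotProductBilin ℝ ℝ w)).isBigO_comp f l).trans
    (isBigO_refl f l).norm_right).trans_tendsto_norm_atTop (tendsto_norm_atTop_atTop.comp h)

theorem stmt_11 (A : Matrix (Fin 2) (Fin 2) ℝ) (hdet : A.det = 0) :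
    ∃ ε > (0:ℝ), ∃ φ : ℝ → (Fin 2 → ℝ), Differentiable ℝ φ ∧
      (∀ t : ℝ, ‖deriv φ t - A.mulVec (φ t)‖ ≤ ε) ∧
      ∀ x₀ : Fin 2 → ℝ, ∀ C : ℝ, ∃ t : ℝ,
        ‖φ t - (NormedSpace.exp (t • A)).mulVec x₀‖ > C := by
  obtain ⟨w, hw, hwA⟩ := exists_vecMul_eq_zero_iff.2 hdet
  obtain ⟨u, hAAu, hwu⟩ := exists_mulVec_mulVec_eq_zero_and_dotProduct_eq hdet hwA
  have hwu_pos : 0 < w ⬝ᵥ u := hwu ▸ by simpa using dotProduct_star_self_pos_iff.2 hw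
  have hu : u ≠ 0 := by rintro rfl; simp at hwu_pos
  have hφ := hasDerivAt_smul_add_sq_smul_mulVec A hAAu
  refine ⟨‖u‖, norm_pos_iff.2 hu, _, fun t => (hφ t).differentiableAt, fun t => ?_, fun x₀ C => ?_⟩
  · rw [(hφ t).deriv, add_sub_cancel_left]
  have hdot (t : ℝ) : w ⬝ᵥ (t • u + (t ^ 2 / 2) • A *ᵥ u - NormedSpace.exp (t • A) *ᵥ x₀) =
      t * (w ⬝ᵥ u) - w ⬝ᵥ x₀ := by
    have hexp : w ᵥ* NormedSpace.exp (t • A) = w :=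
      vecMul_exp_eq_self (by rw [vecMul_smul, hwA, smul_zero])
    simp only [dotProduct_sub, dotProduct_add, dotProduct_smul, dotProduct_mulVec, hwA, hexp,
      zero_dotProduct, smul_eq_mul, mul_zero, add_zero]
  refine ((tendsto_norm_atTop_of_tendsto_dotProduct (l := atTop) w ?_).eventually_gt_atTop C).exists
  simp_rw [hdot]
  exact tendsto_atTop_add_const_right _ _ (tendsto_id.atTop_mul_const hwu_pos)
end

section
/- Let A be a 2×2 real matrix with a repeated nonzero eigenvalue λ and with λ equal to the (1,1) entry a (equivalently bc = 0, where b, c are the off-diagonal entries). Then the best (minimal) Hyers-Ulam constant for the system x' = Ax on ℝ equals ‖A⁻¹‖_∞ = (|λ| + max{|b|,|c|})/λ². -/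
/-!
For a scalar equation with `|u' - λu| ≤ δ`, the function `w = e^{-λt} u` has `|w'| ≤ δ e^{-λt}`,
so `w(s) - δ e^{-λs}/|λ| ≤ w(t) + δ e^{-λt}/|λ|` for all `s, t`; any `a` between the two envelopes
gives `|u - a e^{λt}| ≤ δ/|λ|`. For `A = !![λ, β; 0, λ]` one solves the second component first and
feeds its error `ε/|λ|`, multiplied by `β`, into the first, which gives the constant
`(|λ| + |β|)/λ² = ‖A⁻¹‖_∞`. Conversely, since `x' = Ax` has no nonzero bounded solution, a constant
`w` with `‖Aw‖ ≤ 1` forces `K ≥ ‖w‖`, and `w = A⁻¹ (sign λ, -sign β)` attains `‖A⁻¹‖_∞`. The lower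
triangular case is conjugate to the upper one by the coordinate swap, an isometry of the max norm.
-/

open Matrix

/-- Hyers-Ulam stability of `x' = Ax` on `ℝ` with constant `K` (max norm on `ℝ²`). -/
def IsHUSWith (A : Matrix (Fin 2) (Fin 2) ℝ) (K : ℝ) : Prop :=
  ∀ ε > (0:ℝ), ∀ φ : ℝ → (Fin 2 → ℝ), Differentiable ℝ φ →
    (∀ t : ℝ, ‖deriv φ t - A.mulVec (φ t)‖ ≤ ε) →
    ∃ x₀ : Fin 2 → ℝ, ∀ t : ℝ,
      ‖φ t - (NormedSpace.exp (t • A)).mulVec x₀‖ ≤ K * ε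

open Real

theorem exists_abs_sub_le_of_sub_le_add {f r : ℝ → ℝ} (h : ∀ s t, f s - r s ≤ f t + r t) :
    ∃ a, ∀ t, |f t - a| ≤ r t := by
  refine ⟨⨆ s, (f s - r s), fun t => abs_sub_le_iff.2 ⟨?_, ?_⟩⟩
  · have := le_ciSup ⟨f 0 + r 0, Set.forall_mem_range.2 fun s => h s 0⟩ t
    linarith
  · have := ciSup_le fun s => h s t
    linarith

theorem abs_sub_le_sub_of_abs_deriv_le {f g : ℝ → ℝ} (hf : Differentiable ℝ f)
    (hg : Differentiable ℝ g) (h : ∀ x, |deriv f x| ≤ deriv g x) {s t : ℝ} (hst : s ≤ t) :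
    |f t - f s| ≤ g t - g s := by
  have hsub := monotone_of_deriv_nonneg (hg.sub hf) (fun x => by
    rw [deriv_sub (hg x) (hf x)]; linarith [le_abs_self (deriv f x), h x]) hst
  have hadd := monotone_of_deriv_nonneg (hg.add hf) (fun x => by
    rw [deriv_add (hg x) (hf x)]; linarith [neg_abs_le (deriv f x), h x]) hst
  simp only [Pi.sub_apply, Pi.add_apply] at hsub hadd
  exact abs_sub_le_iff.2 ⟨by linarith, by linarith⟩

theorem exists_abs_sub_mul_exp_le {u : ℝ → ℝ} {lam δ : ℝ} (hlam : lam ≠ 0)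
    (hu : Differentiable ℝ u) (h : ∀ t, |deriv u t - lam * u t| ≤ δ) :
    ∃ a, ∀ t, |u t - a * exp (lam * t)| ≤ δ / |lam| := by
  have hδ : 0 ≤ δ := (abs_nonneg _).trans (h 0)
  have hexp : ∀ t, HasDerivAt (fun t => exp (-(lam * t))) (-lam * exp (-(lam * t))) t := fun t => by
    simpa [mul_comm] using ((hasDerivAt_id t).const_mul lam).neg.exp
  set w : ℝ → ℝ := fun t => exp (-(lam * t)) * u t
  set g : ℝ → ℝ := fun t => -(δ * exp (-(lam * t)) / lam)
  have hw : ∀ t, HasDerivAt w (exp (-(lam * t)) * (deriv u t - lam * u t)) t := fun t =>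
    ((hexp t).mul (hu t).hasDerivAt).congr_deriv (by ring)
  have hg : ∀ t, HasDerivAt g (δ * exp (-(lam * t))) t := fun t =>
    (((hexp t).const_mul δ).div_const lam).neg.congr_deriv (by field_simp)
  have hw_le : ∀ s t, s ≤ t → |w t - w s| ≤ |g s| + |g t| := fun s t hst =>
    (abs_sub_le_sub_of_abs_deriv_le (fun x => (hw x).differentiableAt)
      (fun x => (hg x).differentiableAt) (fun x => by
        rw [(hw x).deriv, (hg x).deriv, abs_mul, abs_of_pos (exp_pos _), mul_comm]
        exact mul_le_mul_of_nonneg_right (h x) (exp_pos _).le) hst).trans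
      (by linarith [le_abs_self (g t), neg_abs_le (g s)])
  obtain ⟨a, ha⟩ := exists_abs_sub_le_of_sub_le_add (f := w) (r := fun t => |g t|) fun s t => by
    rcases le_total s t with hst | hts
    · linarith [neg_abs_le (w t - w s), hw_le s t hst]
    · linarith [le_abs_self (w s - w t), hw_le t s hts]
  refine ⟨a, fun t => ?_⟩
  have hgt : |g t| = exp (-(lam * t)) * (δ / |lam|) := by
    simp only [g, abs_neg, abs_div, abs_mul, abs_of_nonneg hδ, abs_of_pos (exp_pos _)]
    ring
  have hu_eq : u t - a * exp (lam * t) = exp (lam * t) * (w t - a) := by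
    rw [mul_sub, ← mul_assoc, ← exp_add, add_neg_cancel, exp_zero, one_mul, mul_comm]
  calc |u t - a * exp (lam * t)| = exp (lam * t) * |w t - a| := by
        rw [hu_eq, abs_mul, abs_of_pos (exp_pos _)]
    _ ≤ exp (lam * t) * (exp (-(lam * t)) * (δ / |lam|)) :=
        mul_le_mul_of_nonneg_left (hgt ▸ ha t) (exp_pos _).le
    _ = δ / |lam| := by rw [← mul_assoc, ← exp_add, add_neg_cancel, exp_zero, one_mul]

theorem exists_abs_sub_exp_mul_le_of_upperTriangular {p q : ℝ → ℝ} {lam β ε : ℝ} (hlam : lam ≠ 0)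
    (hp : Differentiable ℝ p) (hq : Differentiable ℝ q)
    (hp' : ∀ t, |deriv p t - (lam * p t + β * q t)| ≤ ε)
    (hq' : ∀ t, |deriv q t - lam * q t| ≤ ε) :
    ∃ a y : ℝ, ∀ t, |p t - exp (lam * t) * (a + t * β * y)| ≤ (|lam| + |β|) / lam ^ 2 * ε ∧
      |q t - exp (lam * t) * y| ≤ (|lam| + |β|) / lam ^ 2 * ε := by
  have hε : 0 ≤ ε := (abs_nonneg _).trans (hq' 0)
  obtain ⟨y, hy⟩ := exists_abs_sub_mul_exp_le hlam hq hq'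
  -- subtracting the secular term `t β y e^{λt}` decouples `p` from `q`
  set v : ℝ → ℝ := fun t => p t - t * β * y * exp (lam * t)
  have hv : ∀ t, HasDerivAt v
      (deriv p t - (β * y * exp (lam * t) + t * β * y * (lam * exp (lam * t)))) t := fun t => by
    have hexp : HasDerivAt (fun t => exp (lam * t)) (lam * exp (lam * t)) t := by
      simpa [mul_comm] using ((hasDerivAt_id t).const_mul lam).exp
    exact (hp t).hasDerivAt.sub ((((hasDerivAt_id t).mul_const β).mul_const y).mul hexp
      |>.congr_deriv (by simp))
  have hv' : ∀ t, |deriv v t - lam * v t| ≤ ε + |β| * (ε / |lam|) := fun t => by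
    rw [(hv t).deriv]
    calc _ = |(deriv p t - (lam * p t + β * q t)) + β * (q t - y * exp (lam * t))| := by
          simp only [v]; ring_nf
      _ ≤ ε + |β| * (ε / |lam|) := by
          refine (abs_add_le _ _).trans (add_le_add (hp' t) ?_)
          rw [abs_mul]
          exact mul_le_mul_of_nonneg_left (hy t) (abs_nonneg β)
  obtain ⟨a, ha⟩ := exists_abs_sub_mul_exp_le hlam (fun t => (hv t).differentiableAt) hv'
  refine ⟨a, y, fun t => ⟨?_, ?_⟩⟩
  · calc _ = |v t - a * exp (lam * t)| := by simp only [v]; ring_nf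
      _ ≤ (ε + |β| * (ε / |lam|)) / |lam| := ha t
      _ = (|lam| + |β|) / lam ^ 2 * ε := by rw [← sq_abs]; field_simp
  · calc _ = |q t - y * exp (lam * t)| := by rw [mul_comm]
      _ ≤ ε / |lam| := hy t
      _ = |lam| / lam ^ 2 * ε := by rw [← sq_abs]; field_simp
      _ ≤ (|lam| + |β|) / lam ^ 2 * ε := by gcongr; exact le_add_of_nonneg_right (abs_nonneg β)

theorem NormedSpace.exp_eq_one_add_of_sq_eq_zero {𝔸 : Type*} [Ring 𝔸] [Algebra ℚ 𝔸]
    [TopologicalSpace 𝔸] [IsTopologicalRing 𝔸] [T2Space 𝔸] {x : 𝔸} (hx : x ^ 2 = 0) :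
    NormedSpace.exp x = 1 + x := by
  rw [NormedSpace.exp_eq_tsum_rat]
  dsimp only
  rw [tsum_eq_sum (s := Finset.range 2) fun n hn => ?_]
  · simp [Finset.sum_range_succ]
  · rw [Finset.mem_range, not_lt] at hn
    rw [← Nat.sub_add_cancel hn, pow_add, hx, mul_zero, smul_zero]

theorem exp_smul_upperTriangular (lam β t : ℝ) :
    NormedSpace.exp (t • !![lam, β; 0, lam]) = exp (lam * t) • !![1, t * β; 0, 1] := by
  have hsplit : t • !![lam, β; 0, lam] = (t * lam) • 1 + !![0, t * β; 0, 0] := by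
    ext i j; fin_cases i <;> fin_cases j <;> simp [mul_comm]
  have hN : (!![0, t * β; 0, 0] : Matrix (Fin 2) (Fin 2) ℝ) ^ 2 = 0 := by
    ext i j; fin_cases i <;> fin_cases j <;> simp [sq, Matrix.mul_apply]
  rw [hsplit, Matrix.exp_add_of_commute _ _ ((Commute.one_left _).smul_left _),
    smul_one_eq_diagonal, Matrix.exp_diagonal,
    NormedSpace.exp_eq_one_add_of_sq_eq_zero hN]
  ext i j; fin_cases i <;> fin_cases j <;> simp [Pi.exp_def, ← Real.exp_eq_exp_ℝ, mul_comm]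

theorem exp_smul_upperTriangular_mulVec (lam β t : ℝ) (x : Fin 2 → ℝ) :
    NormedSpace.exp (t • !![lam, β; 0, lam]) *ᵥ x =
      exp (lam * t) • ![x 0 + t * β * x 1, x 1] := by
  rw [exp_smul_upperTriangular, smul_mulVec]
  congr 1
  ext i; fin_cases i <;> simp [vecHead, vecTail]

theorem isHUSWith_upperTriangular {lam β : ℝ} (hlam : lam ≠ 0) :
    IsHUSWith !![lam, β; 0, lam] ((|lam| + |β|) / lam ^ 2) := by
  intro ε hε φ hφ hφ'
  have hφi : ∀ i t, HasDerivAt (fun s => φ s i) (deriv φ t i) t := fun i t =>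
    hasDerivAt_pi.1 (hφ t).hasDerivAt i
  have hcomp : ∀ t, |deriv φ t 0 - (lam * φ t 0 + β * φ t 1)| ≤ ε ∧
      |deriv φ t 1 - lam * φ t 1| ≤ ε := fun t => by
    have := (pi_norm_le_iff_of_nonneg hε.le).1 (hφ' t)
    simpa [Matrix.mulVec, dotProduct, Fin.sum_univ_two] using And.intro (this 0) (this 1)
  obtain ⟨a, y, h⟩ := exists_abs_sub_exp_mul_le_of_upperTriangular hlam
    (fun t => (hφi 0 t).differentiableAt) (fun t => (hφi 1 t).differentiableAt)
    (fun t => (hφi 0 t).deriv ▸ (hcomp t).1) (fun t => (hφi 1 t).deriv ▸ (hcomp t).2)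
  refine ⟨![a, y], fun t => (pi_norm_le_iff_of_nonneg (by positivity)).2 fun i => ?_⟩
  rw [exp_smul_upperTriangular_mulVec]
  fin_cases i
  · simpa using (h t).1
  · simpa using (h t).2

theorem eq_zero_of_forall_abs_exp_mul_le {lam y C : ℝ} (hlam : lam ≠ 0)
    (h : ∀ t, |exp (lam * t) * y| ≤ C) : y = 0 := by
  by_contra hy
  have hy' : 0 < |y| := abs_pos.2 hy
  have hC := h (C / |y| / lam)
  rw [abs_mul, abs_of_pos (exp_pos _), mul_div_cancel₀ _ hlam, ← le_div_iff₀ hy'] at hC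
  linarith [add_one_le_exp (C / |y|)]

theorem eq_zero_of_forall_norm_exp_upperTriangular_mulVec_le {lam β C : ℝ} (hlam : lam ≠ 0)
    {x : Fin 2 → ℝ} (h : ∀ t : ℝ, ‖NormedSpace.exp (t • !![lam, β; 0, lam]) *ᵥ x‖ ≤ C) : x = 0 := by
  have hcomp : ∀ i t, |exp (lam * t) * ![x 0 + t * β * x 1, x 1] i| ≤ C := fun i t => by
    have := (norm_le_pi_norm _ i).trans (h t)
    rwa [exp_smul_upperTriangular_mulVec, Pi.smul_apply, smul_eq_mul, Real.norm_eq_abs] at this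
  have hx₁ : x 1 = 0 := eq_zero_of_forall_abs_exp_mul_le hlam (hcomp 1)
  have hx₀ : x 0 = 0 := eq_zero_of_forall_abs_exp_mul_le hlam fun t => by
    simpa [hx₁] using hcomp 0 t
  ext i; fin_cases i <;> assumption

theorem IsHUSWith.norm_le {A : Matrix (Fin 2) (Fin 2) ℝ} {K : ℝ}
    (hA : ∀ x C, (∀ t : ℝ, ‖NormedSpace.exp (t • A) *ᵥ x‖ ≤ C) → x = 0)
    (hK : IsHUSWith A K) {w : Fin 2 → ℝ} (hw : ‖A *ᵥ w‖ ≤ 1) : ‖w‖ ≤ K := by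
  -- the constant `w` is a `1`-approximate solution, and only the zero solution stays near it
  obtain ⟨x, hx⟩ := hK 1 one_pos (fun _ => w) (differentiable_const w) fun t => by
    rwa [deriv_const, zero_sub, norm_neg]
  have hx₀ : x = 0 := hA x (‖w‖ + K * 1) fun t => by
    have := norm_le_insert' (NormedSpace.exp (t • A) *ᵥ x) w
    rw [norm_sub_rev] at this
    linarith [hx t]
  simpa [hx₀] using hx 0

theorem le_of_isHUSWith_upperTriangular {lam β K : ℝ} (hlam : lam ≠ 0)
    (hK : IsHUSWith !![lam, β; 0, lam] K) : (|lam| + |β|) / lam ^ 2 ≤ K := by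
  -- `w = A⁻¹ (sign λ, -sign β)`, a vector at which `‖A⁻¹‖_∞` is attained
  set w : Fin 2 → ℝ := ![(|lam| + |β|) / lam ^ 2, -SignType.sign β / lam]
  have hw : !![lam, β; 0, lam] *ᵥ w = ![|lam| / lam, -SignType.sign β] := by
    rw [mulVec_fin_two]
    refine vec2_eq ?_ ?_
    · simp only [w, of_apply, cons_val', cons_val_zero, cons_val_fin_one, cons_val_one]
      field_simp
      rw [self_mul_sign]
      ring
    · simp only [w, of_apply, cons_val', cons_val_zero, cons_val_fin_one, cons_val_one, zero_mul,
        zero_add]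
      field_simp
  have hsign : |(SignType.sign β : ℝ)| ≤ 1 := by
    rcases SignType.sign β with _ | _ | _ <;> simp
  refine le_trans ?_ (hK.norm_le (w := w)
    (fun _ _ => eq_zero_of_forall_norm_exp_upperTriangular_mulVec_le hlam) ?_)
  · exact (le_abs_self _).trans (norm_le_pi_norm w 0)
  · rw [hw, pi_norm_le_iff_of_nonneg zero_le_one, Fin.forall_fin_two]
    simp [hlam, hsign]

theorem IsHUSWith.mono {A : Matrix (Fin 2) (Fin 2) ℝ} {K L : ℝ} (h : IsHUSWith A K) (hKL : K ≤ L) :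
    IsHUSWith A L := fun ε hε φ hφ hφ' =>
  (h ε hε φ hφ hφ').imp fun _ hx t => (hx t).trans (mul_le_mul_of_nonneg_right hKL hε.le)

theorem isHUSWith_upperTriangular_iff {lam β K : ℝ} (hlam : lam ≠ 0) :
    IsHUSWith !![lam, β; 0, lam] K ↔ (|lam| + |β|) / lam ^ 2 ≤ K :=
  ⟨le_of_isHUSWith_upperTriangular hlam, (isHUSWith_upperTriangular hlam).mono⟩

theorem norm_comp_equiv {ι E : Type*} [Fintype ι] [SeminormedAddCommGroup E] (v : ι → E)
    (e : ι ≃ ι) : ‖v ∘ e‖ = ‖v‖ :=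
  le_antisymm ((pi_norm_le_iff_of_nonneg (norm_nonneg _)).2 fun i => norm_le_pi_norm v (e i))
    ((pi_norm_le_iff_of_nonneg (norm_nonneg _)).2 fun i => by
      simpa using norm_le_pi_norm (v ∘ e) (e.symm i))

theorem Matrix.exp_submatrix {m : Type*} [Fintype m] [DecidableEq m]
    (A : Matrix m m ℝ) (e : m ≃ m) :
    NormedSpace.exp (A.submatrix e e) = (NormedSpace.exp A).submatrix e e := by
  have := open scoped Norms.Operator in
    NormedSpace.map_exp (reindexAlgEquiv ℝ ℝ e.symm) (continuous_id.matrix_submatrix _ _) A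
  exact this.symm

theorem IsHUSWith.submatrix {A : Matrix (Fin 2) (Fin 2) ℝ} {K : ℝ} (h : IsHUSWith A K)
    (e : Fin 2 ≃ Fin 2) : IsHUSWith (A.submatrix e e) K := by
  intro ε hε φ hφ hφ'
  set ψ : ℝ → Fin 2 → ℝ := fun t => φ t ∘ e.symm
  have hψ : ∀ t, HasDerivAt ψ (deriv φ t ∘ e.symm) t := fun t =>
    hasDerivAt_pi.2 fun i => hasDerivAt_pi.1 (hφ t).hasDerivAt (e.symm i)
  obtain ⟨x, hx⟩ := h ε hε ψ (fun t => (hψ t).differentiableAt) fun t => by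
    have hcomp : deriv φ t - A.submatrix e e *ᵥ φ t = (deriv φ t ∘ e.symm - A *ᵥ ψ t) ∘ e := by
      ext i
      simp only [submatrix_mulVec_equiv, Pi.sub_apply, Function.comp_apply,
        Equiv.symm_apply_apply, ψ]
    rw [(hψ t).deriv, ← norm_comp_equiv _ e, ← hcomp]
    exact hφ' t
  refine ⟨x ∘ e, fun t => ?_⟩
  have hsol : φ t - NormedSpace.exp (t • A.submatrix e e) *ᵥ (x ∘ e) =
      (ψ t - NormedSpace.exp (t • A) *ᵥ x) ∘ e := by
    rw [show t • A.submatrix e e = (t • A).submatrix e e from rfl, Matrix.exp_submatrix,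
      submatrix_mulVec_equiv]
    ext i
    simp only [Pi.sub_apply, Function.comp_apply, Equiv.symm_apply_apply, Function.comp_assoc,
      Equiv.self_comp_symm, Function.comp_id, ψ]
  rw [hsol, norm_comp_equiv]
  exact hx t

theorem isHUSWith_submatrix_iff {A : Matrix (Fin 2) (Fin 2) ℝ} {K : ℝ} (e : Fin 2 ≃ Fin 2) :
    IsHUSWith (A.submatrix e e) K ↔ IsHUSWith A K :=
  ⟨fun h => by simpa using h.submatrix e.symm, fun h => h.submatrix e⟩

theorem matNormInf_inv {lam b c : ℝ} (hlam : lam ≠ 0) (hbc : b * c = 0) :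
    matNormInf !![lam, b; c, lam]⁻¹ = (|lam| + max |b| |c|) / lam ^ 2 := by
  rw [inv_def, adjugate_fin_two_of, det_fin_two_of, hbc, sub_zero]
  simp only [matNormInf, Ring.inverse_eq_inv', _root_.mul_inv_rev, Matrix.smul_apply, of_apply,
    cons_val', cons_val_zero, cons_val_fin_one, smul_eq_mul, abs_mul, abs_inv, cons_val_one,
    mul_neg, abs_neg]
  rw [← mul_add, ← mul_add, add_comm |c|, ← mul_max_of_nonneg _ _ (by positivity),
    max_add_add_left, ← sq_abs]
  field_simp

theorem isHUSWith_iff {lam b c K : ℝ} (hlam : lam ≠ 0) (hbc : b * c = 0) :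
    IsHUSWith !![lam, b; c, lam] K ↔ (|lam| + max |b| |c|) / lam ^ 2 ≤ K := by
  rcases mul_eq_zero.1 hbc with rfl | rfl
  · have hswap : !![lam, 0; c, lam] =
        (!![lam, c; 0, lam]).submatrix (Equiv.swap 0 1) (Equiv.swap 0 1) := by
      ext i j; fin_cases i <;> fin_cases j <;> simp
    rw [hswap, isHUSWith_submatrix_iff, isHUSWith_upperTriangular_iff hlam, abs_zero,
      max_eq_right (abs_nonneg c)]
  · rw [isHUSWith_upperTriangular_iff hlam, abs_zero, max_eq_left (abs_nonneg b)]

theorem stmt_15 (b c lam : ℝ) (hlam : lam ≠ 0) (hbc : b * c = 0)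
    (A : Matrix (Fin 2) (Fin 2) ℝ) (hA : A = !![lam, b; c, lam]) :
    matNormInf A⁻¹ = (|lam| + max |b| |c|) / lam ^ 2 ∧
    IsHUSWith A (matNormInf A⁻¹) ∧
    ∀ K : ℝ, IsHUSWith A K → K ≥ matNormInf A⁻¹ := by
  subst hA
  rw [matNormInf_inv hlam hbc]
  exact ⟨rfl, (isHUSWith_iff hlam hbc).2 le_rfl, fun K => (isHUSWith_iff hlam hbc).1⟩
end

section
/- Let λ ≥ (e−1)/e + √(1−2e+2e²)/e and A = [[0, 1],[−λ², 2λ]] (so A has repeated eigenvalue λ > 0). Then the second-order equation x'' − 2λx' + λ²x = 0 is Hyers-Ulam stable on ℝ with constant K = (λ + 2e^{−1})/λ², while for 0 < λ < (e−1)/e + √(1−2e+2e²)/e it is Hyers-Ulam stable with constant K = (2λ+1)/λ². -/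
/-!
Both constants are at least `1 / λ²`, and the equation is in fact Hyers-Ulam stable with
constant `1 / λ²`. Write `L φ = φ'' - 2λφ' + λ²φ`. Then `u = e^{-λt}(φ' - λφ)` has derivative
`e^{-λt} L φ`, of size at most `ε e^{-λt}`, so `u` lies within `(ε/λ) e^{-λt}` of a constant `c`.
Likewise `w = e^{-λt} φ - c t` has derivative `u - c` and lies within `(ε/λ²) e^{-λt}` of a
constant `d`. Hence `φ` lies within `ε/λ²` of the solution `(c t + d) e^{λt}`.
-/

open Real

/-- Hyers-Ulam stability of `x'' − 2λx' + λ²x = 0` on `ℝ` with constant `K`. -/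
def ScalarHUSWith (lam K : ℝ) : Prop :=
  ∀ ε > (0:ℝ), ∀ φ : ℝ → ℝ, Differentiable ℝ φ → Differentiable ℝ (deriv φ) →
    (∀ t : ℝ, |deriv (deriv φ) t - 2 * lam * deriv φ t + lam ^ 2 * φ t| ≤ ε) →
    ∃ x : ℝ → ℝ, Differentiable ℝ x ∧ Differentiable ℝ (deriv x) ∧
      (∀ t : ℝ, deriv (deriv x) t - 2 * lam * deriv x t + lam ^ 2 * x t = 0) ∧
      ∀ t : ℝ, |φ t - x t| ≤ K * ε

open Filter Topology

lemma exists_abs_sub_le_of_abs_deriv_le {k k' q q' : ℝ → ℝ}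
    (hk : ∀ t, HasDerivAt k (k' t) t) (hq : ∀ t, HasDerivAt q (q' t) t)
    (hle : ∀ t, |k' t| ≤ q' t) (hq0 : Tendsto q atTop (𝓝 0)) :
    ∃ d, ∀ t, |k t - d| ≤ -q t := by
  have hq_mono : Monotone q :=
    monotone_of_hasDerivAt_nonneg hq fun t => (abs_nonneg _).trans (hle t)
  have hq_nonpos : ∀ t, q t ≤ 0 := hq_mono.ge_of_tendsto hq0
  have hup : Monotone fun t => k t + q t :=
    monotone_of_hasDerivAt_nonneg (fun t => (hk t).add (hq t))
      fun t => show 0 ≤ k' t + q' t by linarith [neg_abs_le (k' t), hle t]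
  have hdown : Antitone fun t => k t - q t :=
    antitone_of_hasDerivAt_nonpos (fun t => (hk t).sub (hq t))
      fun t => show k' t - q' t ≤ 0 by linarith [le_abs_self (k' t), hle t]
  have hbdd : BddAbove (Set.range fun t => k t + q t) := by
    refine ⟨k 0 - q 0, ?_⟩
    rintro _ ⟨t, rfl⟩
    rcases le_total t 0 with ht | ht
    · linarith [hup ht, hq_nonpos 0]
    · linarith [hdown ht, hq_nonpos t]
  set d := ⨆ t, (k t + q t)
  have hup_lim : Tendsto (fun t => k t + q t) atTop (𝓝 d) := tendsto_atTop_ciSup hup hbdd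
  have hdown_lim : Tendsto (fun t => k t - q t) atTop (𝓝 d) := by
    simpa using (hup_lim.sub hq0).sub hq0
  refine ⟨d, fun t => abs_le.mpr ⟨?_, ?_⟩⟩
  · linarith [hdown.le_of_tendsto hdown_lim t]
  · linarith [hup.ge_of_tendsto hup_lim t]

lemma hasDerivAt_exp_const_mul (a t : ℝ) :
    HasDerivAt (fun t => exp (a * t)) (a * exp (a * t)) t := by
  simpa [mul_comm] using ((hasDerivAt_id t).const_mul a).exp

lemma exists_abs_sub_le_of_abs_deriv_le_mul_exp {lam C : ℝ} (hlam : 0 < lam) {k k' : ℝ → ℝ}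
    (hk : ∀ t, HasDerivAt k (k' t) t) (hb : ∀ t, |k' t| ≤ C * exp (-lam * t)) :
    ∃ d, ∀ t, |k t - d| ≤ C / lam * exp (-lam * t) := by
  have hq (t : ℝ) :
      HasDerivAt (fun t => -(C / lam) * exp (-lam * t)) (C * exp (-lam * t)) t :=
    ((hasDerivAt_exp_const_mul (-lam) t).const_mul _).congr_deriv (by field_simp)
  have hq0 : Tendsto (fun t => -(C / lam) * exp (-lam * t)) atTop (𝓝 0) := by
    simpa using
      (tendsto_exp_neg_atTop_nhds_zero.comp (tendsto_id.const_mul_atTop hlam)).const_mul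
        (-(C / lam))
  simpa using exists_abs_sub_le_of_abs_deriv_le hk hq hb hq0

/-- The general solution of `x'' - 2λx' + λ²x = 0`. -/
noncomputable def affineMulExp (lam a b t : ℝ) : ℝ := (a * t + b) * exp (lam * t)

lemma hasDerivAt_affineMulExp (lam a b t : ℝ) :
    HasDerivAt (affineMulExp lam a b) (affineMulExp lam (lam * a) (lam * b + a) t) t := by
  refine ((((hasDerivAt_id t).const_mul a).add_const b).mul
    (hasDerivAt_exp_const_mul lam t)).congr_deriv ?_
  simp only [affineMulExp, id]
  ring

lemma deriv_affineMulExp (lam a b : ℝ) :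
    deriv (affineMulExp lam a b) = affineMulExp lam (lam * a) (lam * b + a) :=
  funext fun t => (hasDerivAt_affineMulExp lam a b t).deriv

lemma differentiable_affineMulExp (lam a b : ℝ) : Differentiable ℝ (affineMulExp lam a b) :=
  fun t => (hasDerivAt_affineMulExp lam a b t).differentiableAt

lemma affineMulExp_ode (lam a b t : ℝ) :
    deriv (deriv (affineMulExp lam a b)) t - 2 * lam * deriv (affineMulExp lam a b) t
      + lam ^ 2 * affineMulExp lam a b t = 0 := by
  simp only [deriv_affineMulExp, affineMulExp]
  ring

lemma ScalarHUSWith.mono {lam K K' : ℝ} (h : ScalarHUSWith lam K) (hK : K ≤ K') :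
    ScalarHUSWith lam K' := by
  intro ε hε φ hφ hφ' hb
  obtain ⟨x, hx, hx', hode, hclose⟩ := h ε hε φ hφ hφ' hb
  exact ⟨x, hx, hx', hode, fun t => (hclose t).trans (by gcongr)⟩

theorem scalarHUSWith_one_div_sq {lam : ℝ} (hlam : 0 < lam) :
    ScalarHUSWith lam (1 / lam ^ 2) := by
  intro ε hε φ hφ hφ' hb
  set u := fun t => exp (-lam * t) * (deriv φ t - lam * φ t)
  have hu (t : ℝ) : HasDerivAt u
      (exp (-lam * t) * (deriv (deriv φ) t - 2 * lam * deriv φ t + lam ^ 2 * φ t)) t := by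
    refine ((hasDerivAt_exp_const_mul (-lam) t).mul
      ((hφ' t).hasDerivAt.sub ((hφ t).hasDerivAt.const_mul lam))).congr_deriv ?_
    simp only [Pi.sub_apply]
    ring
  obtain ⟨c, hc⟩ := exists_abs_sub_le_of_abs_deriv_le_mul_exp hlam hu fun t => by
    rw [abs_mul, abs_of_pos (exp_pos _), mul_comm]
    exact mul_le_mul_of_nonneg_right (hb t) (exp_pos _).le
  set w := fun t => exp (-lam * t) * φ t - c * t
  have hw (t : ℝ) : HasDerivAt w (u t - c) t := by
    refine (((hasDerivAt_exp_const_mul (-lam) t).mul (hφ t).hasDerivAt).sub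
      ((hasDerivAt_id t).const_mul c)).congr_deriv ?_
    simp only [u]
    ring
  obtain ⟨d, hd⟩ := exists_abs_sub_le_of_abs_deriv_le_mul_exp hlam hw hc
  refine ⟨affineMulExp lam c d, differentiable_affineMulExp lam c d, ?_,
    affineMulExp_ode lam c d, fun t => ?_⟩
  · rw [deriv_affineMulExp]
    exact differentiable_affineMulExp _ _ _
  have hinv : exp (lam * t) * exp (-lam * t) = 1 := by
    rw [← exp_add, show lam * t + -lam * t = 0 by ring, exp_zero]
  have hsplit : φ t - affineMulExp lam c d t = exp (lam * t) * (w t - d) := by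
    simp only [w, affineMulExp]
    linear_combination (-φ t) * hinv
  calc |φ t - affineMulExp lam c d t|
      = exp (lam * t) * |w t - d| := by rw [hsplit, abs_mul, abs_of_pos (exp_pos _)]
    _ ≤ exp (lam * t) * (ε / lam / lam * exp (-lam * t)) := by gcongr; exact hd t
    _ = 1 / lam ^ 2 * ε := by
      rw [mul_left_comm, hinv]
      field_simp

theorem stmt_18 (lam : ℝ) (hlam : 0 < lam) :
    (lam ≥ (Real.exp 1 - 1) / Real.exp 1 +
        Real.sqrt (1 - 2 * Real.exp 1 + 2 * (Real.exp 1) ^ 2) / Real.exp 1 →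
      ScalarHUSWith lam ((lam + 2 * (Real.exp 1)⁻¹) / lam ^ 2)) ∧
    (lam < (Real.exp 1 - 1) / Real.exp 1 +
        Real.sqrt (1 - 2 * Real.exp 1 + 2 * (Real.exp 1) ^ 2) / Real.exp 1 →
      ScalarHUSWith lam ((2 * lam + 1) / lam ^ 2)) := by
  have hstable := scalarHUSWith_one_div_sq hlam
  refine ⟨fun hbig => hstable.mono ?_, fun _ => hstable.mono ?_⟩
  · have hroot : 0 ≤ √(1 - 2 * exp 1 + 2 * exp 1 ^ 2) / exp 1 := by positivity
    have hsplit : (exp 1 - 1) / exp 1 = 1 - (exp 1)⁻¹ := by field_simp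
    have hinv : 0 < (exp 1)⁻¹ := inv_pos.mpr (exp_pos 1)
    gcongr
    linarith
  · gcongr
    linarith
end
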